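/- Let A be a division ring, σ an injective endomorphism of A, δ a σ-derivation, and R = A[∂; σ, δ]. For any nonzero a, b ∈ R there exist s, t ∈ R such that Ra + Rb = R·(sa + tb); that is, any two nonzero elements have a right greatest common divisor expressible as a left linear combination (Bezout property). -/
import Mathlib

/-- An Ore extension (skew polynomial ring) `R = A[∂; σ, δ]`: it contains `A` via `ι`,
the distinguished element `d = ∂` satisfies the commutation rule
`∂ · a = σ(a) · ∂ + δ(a)`, and every element of `R` has a unique representation
as a polynomial `∑ ι(aₙ) ∂ⁿ` with left coefficients in `A`. -/
structure OreExtension (A : Type*) [Ring A] (R : Type*) [Ring R]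
    (σ : A →+* A) (δ : A →+ A) : Type _ where
  ι : A →+* R
  d : R
  comm : ∀ a : A, d * ι a = ι (σ a) * d + ι (δ a)
  coeff : R ≃+ (ℕ →₀ A)
  coeff_symm : ∀ p : ℕ →₀ A, coeff.symm p = p.sum fun n a => ι a * d ^ n

/-- The degree in `∂` of an element of an Ore extension (`0` has degree `0`). -/
noncomputable def OreExtension.deg {A : Type*} [Ring A] {R : Type*} [Ring R]
    {σ : A →+* A} {δ : A →+ A} (e : OreExtension A R σ δ) (r : R) : ℕ :=
  (e.coeff r).support.sup id

namespace OreExtension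

variable {A : Type*} [Ring A] {R : Type*} [Ring R] {σ : A →+* A} {δ : A →+ A}
  (e : OreExtension A R σ δ)

lemma coeff_monomial (a : A) (n : ℕ) :
    e.coeff (e.ι a * e.d ^ n) = Finsupp.single n a := by
  have h := e.coeff_symm (Finsupp.single n a)
  rw [Finsupp.sum_single_index (by simp)] at h
  rw [← h, AddEquiv.apply_symm_apply]

lemma decomp (r : R) : (e.coeff r).sum (fun n a => e.ι a * e.d ^ n) = r := by
  rw [← e.coeff_symm]; exact e.coeff.symm_apply_apply r

lemma eq_zero_of_coeff (r : R) (h : ∀ m, e.coeff r m = 0) : r = 0 := by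
  have : e.coeff r = 0 := Finsupp.ext h
  have := congrArg e.coeff.symm this
  simpa using this

lemma key_mono (j : ℕ) (a b : A) (i : ℕ) :
    (∀ m, j + i < m → e.coeff (e.ι a * e.d ^ j * (e.ι b * e.d ^ i)) m = 0) ∧
    e.coeff (e.ι a * e.d ^ j * (e.ι b * e.d ^ i)) (j + i) = a * (σ ^ j) b := by
  induction j generalizing b i with
  | zero =>
    have hx : e.ι a * e.d ^ 0 * (e.ι b * e.d ^ i) = e.ι (a * b) * e.d ^ i := by
      rw [pow_zero, mul_one, ← mul_assoc, ← map_mul]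
    rw [hx, e.coeff_monomial]
    constructor
    · intro m hm
      exact Finsupp.single_eq_of_ne (by omega)
    · simp
  | succ j ih =>
    have hx : e.ι a * e.d ^ (j + 1) * (e.ι b * e.d ^ i)
        = e.ι a * e.d ^ j * (e.ι (σ b) * e.d ^ (i + 1))
          + e.ι a * e.d ^ j * (e.ι (δ b) * e.d ^ i) := by
      rw [pow_succ]
      have : e.d * (e.ι b * e.d ^ i) = (e.ι (σ b) * e.d + e.ι (δ b)) * e.d ^ i := by
        rw [← mul_assoc, e.comm]
      calc e.ι a * (e.d ^ j * e.d) * (e.ι b * e.d ^ i)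
          = e.ι a * e.d ^ j * (e.d * (e.ι b * e.d ^ i)) := by
            rw [mul_assoc, mul_assoc, mul_assoc]
        _ = e.ι a * e.d ^ j * ((e.ι (σ b) * e.d + e.ι (δ b)) * e.d ^ i) := by rw [this]
        _ = _ := by
            rw [add_mul, mul_add, mul_assoc, mul_assoc (e.ι (σ b)) e.d (e.d ^ i),
              ← pow_succ', ← mul_assoc (e.ι a)]
    obtain ⟨h1, h2⟩ := ih (σ b) (i + 1)
    obtain ⟨h1', h2'⟩ := ih (δ b) i
    constructor
    · intro m hm
      rw [hx, map_add e.coeff, Finsupp.add_apply, h1 m (by omega), h1' m (by omega), add_zero]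
    · rw [hx, map_add e.coeff, Finsupp.add_apply]
      have e1 : j + 1 + i = j + (i + 1) := by omega
      rw [e1, h2, h1' (j + (i+1)) (by omega), add_zero]
      rw [pow_succ, RingHom.mul_def, RingHom.comp_apply]

lemma key (a : A) (j k : ℕ) (r : R) (hr : ∀ m, k < m → e.coeff r m = 0) :
    (∀ m, j + k < m → e.coeff (e.ι a * e.d ^ j * r) m = 0) ∧
    e.coeff (e.ι a * e.d ^ j * r) (j + k) = a * (σ ^ j) (e.coeff r k) := by
  have hsupp : ∀ i ∈ (e.coeff r).support, i ≤ k := by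
    intro i hi
    by_contra h
    exact Finsupp.mem_support_iff.mp hi (hr i (by omega))
  have hx : e.ι a * e.d ^ j * r
      = ∑ i ∈ (e.coeff r).support, e.ι a * e.d ^ j * (e.ι (e.coeff r i) * e.d ^ i) := by
    conv_lhs => rw [← e.decomp r]
    rw [Finsupp.sum, Finset.mul_sum]
  constructor
  · intro m hm
    rw [hx, map_sum]
    simp only [Finset.sum_apply']
    refine Finset.sum_eq_zero fun i hi => ?_
    exact (e.key_mono j a (e.coeff r i) i).1 m (by have := hsupp i hi; omega)
  · rw [hx, map_sum]
    simp only [Finset.sum_apply']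
    by_cases hk : k ∈ (e.coeff r).support
    · rw [Finset.sum_eq_single_of_mem k hk]
      · exact (e.key_mono j a (e.coeff r k) k).2
      · intro i hi hik
        have hik' : i < k := lt_of_le_of_ne (hsupp i hi) hik
        exact (e.key_mono j a (e.coeff r i) i).1 (j + k) (by omega)
    · have hck : e.coeff r k = 0 := by simpa using Finsupp.notMem_support_iff.mp hk
      rw [hck, map_zero, mul_zero]
      refine Finset.sum_eq_zero fun i hi => ?_
      have hik' : i < k := lt_of_le_of_ne (hsupp i hi) (by rintro rfl; exact hk hi)
      exact (e.key_mono j a (e.coeff r i) i).1 (j + k) (by omega)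

lemma coeff_deg_ne_zero {r : R} (hr : r ≠ 0) : e.coeff r (e.deg r) ≠ 0 := by
  have hne : (e.coeff r).support.Nonempty := by
    rw [Finsupp.support_nonempty_iff]
    intro h
    exact hr (e.eq_zero_of_coeff r (by simp [h]))
  obtain ⟨b, hb, hsup⟩ := Finset.exists_mem_eq_sup _ hne id
  rw [deg, hsup]
  exact Finsupp.mem_support_iff.mp hb

lemma coeff_eq_zero_of_deg_lt {r : R} {m : ℕ} (h : e.deg r < m) : e.coeff r m = 0 := by
  by_contra h'
  have : m ≤ e.deg r := Finset.le_sup (f := id) (Finsupp.mem_support_iff.mpr h')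
  omega

lemma deg_lt_of_bdd {r : R} {n : ℕ} (h : ∀ m, n ≤ m → e.coeff r m = 0) (hr : r ≠ 0) :
    e.deg r < n := by
  by_contra hc
  exact e.coeff_deg_ne_zero hr (h _ (by omega))

end OreExtension

section Division

variable {A : Type*} [DivisionRing A] {R : Type*} [Ring R] {σ : A →+* A} {δ : A →+ A}
  (e : OreExtension A R σ δ)

lemma OreExtension.div_aux {b : R} (hb : b ≠ 0) :
    ∀ n, ∀ a : R, (∀ m, n ≤ m → e.coeff a m = 0) →
      ∃ q r : R, a = q * b + r ∧ (r = 0 ∨ e.deg r < e.deg b) := by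
  intro n
  induction n with
  | zero =>
    intro a ha
    have : a = 0 := e.eq_zero_of_coeff a fun m => ha m (Nat.zero_le m)
    exact ⟨0, 0, by simp [this], Or.inl rfl⟩
  | succ n ih =>
    intro a ha
    by_cases hcase : n < e.deg b
    · refine ⟨0, a, by simp, ?_⟩
      by_cases ha0 : a = 0
      · exact Or.inl ha0
      · exact Or.inr (lt_of_lt_of_le (e.deg_lt_of_bdd ha ha0) hcase)
    · push_neg at hcase
      set m := e.deg b with hm
      set j := n - m with hj
      have hjm : j + m = n := by omega
      have hβ : e.coeff b m ≠ 0 := e.coeff_deg_ne_zero hb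
      have hσβ : (σ ^ j) (e.coeff b m) ≠ 0 := fun h =>
        hβ ((σ ^ j).injective (h.trans (map_zero _).symm))
      set c := e.coeff a n * ((σ ^ j) (e.coeff b m))⁻¹ with hc
      obtain ⟨hkey1, hkey2⟩ := e.key c j m b (fun m' hm' => e.coeff_eq_zero_of_deg_lt hm')
      set a' := a - e.ι c * e.d ^ j * b with ha'
      have ha'bdd : ∀ m', n ≤ m' → e.coeff a' m' = 0 := by
        intro m' hm'
        have hsub : e.coeff a' m' = e.coeff a m' - e.coeff (e.ι c * e.d ^ j * b) m' := by
          rw [ha', map_sub]; rfl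
        rcases eq_or_lt_of_le hm' with hEq | hLt
        · rw [hsub, ← hEq, ← hjm, hkey2, hjm, hc, mul_assoc,
            inv_mul_cancel₀ hσβ, mul_one, sub_self]
        · rw [hsub, ha m' (by omega), hkey1 m' (by omega), sub_self]
      obtain ⟨q, r, hqr, hrlt⟩ := ih a' ha'bdd
      refine ⟨q + e.ι c * e.d ^ j, r, ?_, hrlt⟩
      have h0 : a = a' + e.ι c * e.d ^ j * b := by rw [ha', sub_add_cancel]
      rw [h0, hqr, add_mul]
      abel

lemma OreExtension.euclid :
    ∀ n, ∀ a b : R, b ≠ 0 → e.deg b ≤ n → ∃ s t : R,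
      (Ideal.span {a, b} : Ideal R) = Ideal.span {s * a + t * b} := by
  intro n
  induction n using Nat.strong_induction_on with
  | _ n ih =>
    intro a b hb hbn
    obtain ⟨q, r, hqr, hr⟩ := e.div_aux hb (e.deg a + 1) a
      (fun m hm => e.coeff_eq_zero_of_deg_lt (by omega))
    by_cases hr0 : r = 0
    · subst hr0
      rw [add_zero] at hqr
      refine ⟨0, 1, ?_⟩
      rw [zero_mul, one_mul, zero_add]
      apply le_antisymm
      · rw [Ideal.span_le]
        intro x hx
        rcases hx with hx | hx
        · subst hx
          rw [hqr]
          exact Ideal.mul_mem_left _ q (Ideal.subset_span rfl)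
        · simp only [Set.mem_singleton_iff] at hx
          subst hx
          exact Ideal.subset_span rfl
      · exact Ideal.span_mono (by simp)
    · have hrb : e.deg r < e.deg b := hr.resolve_left hr0
      obtain ⟨s', t', hst⟩ := ih (e.deg r) (by omega) b r hr0 le_rfl
      have hspan : (Ideal.span {a, b} : Ideal R) = Ideal.span {b, r} := by
        apply le_antisymm
        · rw [Ideal.span_le]
          rintro x (hx | hx)
          · subst hx
            rw [hqr]
            exact add_mem (Ideal.mul_mem_left _ q (Ideal.subset_span (by simp)))
              (Ideal.subset_span (by simp))
          · simp only [Set.mem_singleton_iff] at hx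
            subst hx
            exact Ideal.subset_span (by simp)
        · rw [Ideal.span_le]
          rintro x (hx | hx)
          · subst hx
            exact Ideal.subset_span (by simp)
          · simp only [Set.mem_singleton_iff] at hx
            rw [hx, eq_sub_of_add_eq' hqr.symm]
            exact sub_mem (Ideal.subset_span (by simp))
              (Ideal.mul_mem_left _ q (Ideal.subset_span (by simp)))
      refine ⟨t', s' - t' * q, ?_⟩
      rw [hspan, hst]
      congr 1
      have hr' : r = a - q * b := eq_sub_of_add_eq' hqr.symm
      rw [hr']
      ext x
      constructor <;> intro hx <;> simp only [Set.mem_singleton_iff] at hx ⊢ <;>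
        rw [hx] <;> noncomm_ring

end Division

/-- Bezout property: in `R = A[∂; σ, δ]` over a division ring `A` with `σ` injective,
for nonzero `a, b` there are `s, t` with `Ra + Rb = R(sa + tb)`, i.e. the right gcd of
`a` and `b` exists and is a left linear combination of `a` and `b`. -/
theorem ore_extension_bezout {A R : Type*} [DivisionRing A] [Ring R]
    (σ : A →+* A) (δ : A →+ A) (hσ : Function.Injective σ)
    (hδ : ∀ a b : A, δ (a * b) = σ a * δ b + δ a * b)
    (e : OreExtension A R σ δ) :
    ∀ a b : R, a ≠ 0 → b ≠ 0 → ∃ s t : R,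
      (Ideal.span {a, b} : Ideal R) = Ideal.span {s * a + t * b} := by
  intro a b _ hb
  exact e.euclid (e.deg b) a b hb le_rfl
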